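/- For (x,y) ∈ ℝ² with ρ = √(x²+y²) > 0, the matrix ξ = (1/ρ)·[[√2·ρ, 0, ρ, 0], [-y, x, -√2·y, 0], [x, y, √2·x, 0], [0, 0, 0, ρ]] satisfies ξᵀ η ξ = η with η = diag(-1,1,1,1), and ξ·(1,0,0,0)ᵀ = (√2, -y/ρ, x/ρ, 0)ᵀ. -/

import Mathlib

open Matrix

noncomputable def minkEta : Matrix (Fin 4) (Fin 4) ℝ :=
  Matrix.diagonal ![-1, 1, 1, 1]

noncomputable def rotBoost (x y : ℝ) : Matrix (Fin 4) (Fin 4) ℝ :=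
  (Real.sqrt (x ^ 2 + y ^ 2))⁻¹ •
    !![Real.sqrt 2 * Real.sqrt (x ^ 2 + y ^ 2), 0, Real.sqrt (x ^ 2 + y ^ 2), 0;
       -y, x, -(Real.sqrt 2 * y), 0;
       x, y, Real.sqrt 2 * x, 0;
       0, 0, 0, Real.sqrt (x ^ 2 + y ^ 2)]

/-!
`rotBoost x y = R * B`, where `B` is the boost along the second spatial axis with
`cosh φ = √2`, `sinh φ = 1`, and `R` rotates the spatial xy-plane by the polar angle of `(x, y)`.
Both preserve `η`, hence so does their product; `B` sends `(1, 0, 0, 0)` to `(√2, 0, 1, 0)`,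
which `R` turns into `(√2, -y/ρ, x/ρ, 0)`.
-/

def Matrix.PreservesForm {n R : Type*} [Fintype n] [Mul R] [AddCommMonoid R]
    (η A : Matrix n n R) : Prop :=
  Aᵀ * η * A = η

theorem Matrix.PreservesForm.mul {n R : Type*} [Fintype n] [CommSemiring R]
    {η A B : Matrix n n R} (hA : η.PreservesForm A) (hB : η.PreservesForm B) :
    η.PreservesForm (A * B) :=
  calc (A * B)ᵀ * η * (A * B) = Bᵀ * (Aᵀ * η * A) * B := by
        simp only [transpose_mul, Matrix.mul_assoc]
    _ = η := by rw [hA, hB]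

def xyRotation (c s : ℝ) : Matrix (Fin 4) (Fin 4) ℝ :=
  !![1, 0, 0, 0;
     0, c, -s, 0;
     0, s, c, 0;
     0, 0, 0, 1]

def yBoost (ch sh : ℝ) : Matrix (Fin 4) (Fin 4) ℝ :=
  !![ch, 0, sh, 0;
     0, 1, 0, 0;
     sh, 0, ch, 0;
     0, 0, 0, 1]

theorem minkEta_preservesForm_xyRotation {c s : ℝ} (h : c ^ 2 + s ^ 2 = 1) :
    minkEta.PreservesForm (xyRotation c s) := by
  ext i j
  fin_cases i <;> fin_cases j <;>
    simp only [xyRotation, minkEta, mul_apply, transpose_apply, Fin.sum_univ_four, of_apply,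
      cons_val', cons_val, cons_val_zero, cons_val_one, cons_val_fin_one, diagonal_apply_eq,
      diagonal_apply_ne, ne_eq, Fin.reduceEq, not_false_eq_true, Fin.isValue, Fin.zero_eta,
      Fin.mk_one, Fin.reduceFinMk] <;>
    linarith

theorem minkEta_preservesForm_yBoost {ch sh : ℝ} (h : ch ^ 2 - sh ^ 2 = 1) :
    minkEta.PreservesForm (yBoost ch sh) := by
  ext i j
  fin_cases i <;> fin_cases j <;>
    simp only [yBoost, minkEta, mul_apply, transpose_apply, Fin.sum_univ_four, of_apply,
      cons_val', cons_val, cons_val_zero, cons_val_one, cons_val_fin_one, diagonal_apply_eq,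
      diagonal_apply_ne, ne_eq, Fin.reduceEq, not_false_eq_true, Fin.isValue, Fin.zero_eta,
      Fin.mk_one, Fin.reduceFinMk] <;>
    linarith

theorem rotBoost_eq_xyRotation_mul_yBoost {x y : ℝ} (hρ : Real.sqrt (x ^ 2 + y ^ 2) ≠ 0) :
    rotBoost x y =
      xyRotation (x / Real.sqrt (x ^ 2 + y ^ 2)) (y / Real.sqrt (x ^ 2 + y ^ 2)) *
        yBoost (Real.sqrt 2) 1 := by
  ext i j
  fin_cases i <;> fin_cases j <;>
    simp only [rotBoost, xyRotation, yBoost, Matrix.smul_apply, smul_eq_mul, mul_apply,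
      Fin.sum_univ_four, of_apply, cons_val', cons_val, cons_val_zero, cons_val_one,
      cons_val_fin_one, Fin.isValue, Fin.zero_eta, Fin.mk_one, Fin.reduceFinMk] <;>
    field_simp <;> ring

theorem stmt_13 (x y : ℝ) (hρ : 0 < Real.sqrt (x ^ 2 + y ^ 2)) :
    (rotBoost x y)ᵀ * minkEta * rotBoost x y = minkEta ∧
    (rotBoost x y).mulVec ![1, 0, 0, 0] =
      ![Real.sqrt 2, -y / Real.sqrt (x ^ 2 + y ^ 2),
        x / Real.sqrt (x ^ 2 + y ^ 2), 0] := by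
  have h_unit : (x / Real.sqrt (x ^ 2 + y ^ 2)) ^ 2 + (y / Real.sqrt (x ^ 2 + y ^ 2)) ^ 2 = 1 := by
    rw [div_pow, div_pow, ← add_div, Real.sq_sqrt (by positivity), div_self]
    exact (Real.sqrt_pos.mp hρ).ne'
  have h_rapidity : Real.sqrt 2 ^ 2 - 1 ^ 2 = 1 := by norm_num
  rw [rotBoost_eq_xyRotation_mul_yBoost hρ.ne']
  refine ⟨(minkEta_preservesForm_xyRotation h_unit).mul
    (minkEta_preservesForm_yBoost h_rapidity), ?_⟩
  ext i
  fin_cases i <;> simp [xyRotation, yBoost, mulVec, dotProduct, Fin.sum_univ_four, neg_div]
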